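/- Let G be a hexacyclic graph (a connected simple graph on n ≥ 8 vertices with n+5 edges). Then the inverse degree ρ(G) = Σ_{v} 1/deg(v) satisfies (n−10)/2 + 10/3 ≤ ρ(G) ≤ (n−4) + 1/(n−1); the upper bound is attained by a graph with degree sequence (n−1, 4^4, 1^{n−5}) and, for n ≥ 10, the lower bound is attained by a graph with degree sequence (3^{10}, 2^{n−10}). -/

import Mathlib

/-!
Lower bound: `1 / d ≥ (5 - d) / 6` for every positive integer `d` (with equality at `d = 2, 3`),
and the degrees sum to `2 (n + 5)`.

Upper bound: each of the `p` pendant vertices contributes `1`. In a connected graph on at least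
three vertices the neighbour of a pendant vertex is not pendant, so the other `s = n - p` (core)
vertices have degree at least `2` and span `s + 5` edges: their core degrees `e v ≤ s - 1` sum to
`2 s + 10`, which forces `s ≥ 5`. If `s = 5` the core is `K₅`, each core vertex has degree
`4 + q v` with `∑ q v = p`, and since `x ↦ 1 / c - 1 / (c + x)` is subadditive, the sum of the
`1 / (4 + q v)` is largest when all pendant vertices hang at one core vertex. If `s ≥ 6`, bounding
`1 / deg v` by the chord of `1 / x` between `2` and `s - 1`, evaluated at `e v`, bounds the core
contribution by `s / 2 - 5 / (s - 1) ≤ s - 4`.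
-/

/-- The inverse degree of a graph on `Fin n`: the sum over all vertices of the
reciprocal of the degree. -/
noncomputable def inverseDegree {n : ℕ} (G : SimpleGraph (Fin n)) : ℝ :=
  ∑ v : Fin n, (1 : ℝ) / ((G.neighborSet v).ncard : ℝ)

/-- `d` (0-indexed) is the degree sequence of `G`: some relabelling of the
vertices realizes the degrees `d 0, …, d (n-1)`. -/
def IsDegreeSequence {n : ℕ} (G : SimpleGraph (Fin n)) (d : ℕ → ℕ) : Prop :=
  ∃ σ : Equiv.Perm (Fin n), ∀ i : Fin n, (G.neighborSet (σ i)).ncard = d (i : ℕ)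

open Finset

lemma five_sub_div_six_le_one_div {d : ℕ} (hd : 1 ≤ d) : (5 - d : ℝ) / 6 ≤ 1 / d := by
  have hsq : (0 : ℝ) ≤ (d - 2) * (d - 3) := by
    rcases (show d ≤ 2 ∨ 3 ≤ d by omega) with h | h
    · interval_cases d <;> norm_num
    · have h3 : (3 : ℝ) ≤ d := by exact_mod_cast h
      nlinarith
  have hpos : (0 : ℝ) < d := by exact_mod_cast hd
  rw [div_le_div_iff₀ (by norm_num) hpos]
  nlinarith

lemma one_div_le_half_sub {d e m : ℕ} (hd : 2 ≤ d) (hed : e ≤ d) (hem : e ≤ m) :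
    (1 : ℝ) / d ≤ 1 / 2 - (e - 2) / (2 * m) := by
  rcases le_or_gt e 2 with he | he
  · have he' : (e : ℝ) ≤ 2 := by exact_mod_cast he
    have hchord : (e - 2 : ℝ) / (2 * m) ≤ 0 :=
      div_nonpos_of_nonpos_of_nonneg (by linarith) (by positivity)
    have : (1 : ℝ) / d ≤ 1 / 2 := one_div_le_one_div_of_le (by norm_num) (by exact_mod_cast hd)
    linarith
  · have he' : (2 : ℝ) < e := by exact_mod_cast he
    have hm : (e : ℝ) ≤ m := by exact_mod_cast hem
    have hm0 : (0 : ℝ) < m := by linarith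
    have hchord :
        (1 : ℝ) / 2 - (e - 2) / (2 * m) - 1 / e = (e - 2) * (m - e) / (2 * m * e) := by
      field_simp; ring
    calc (1 : ℝ) / d ≤ 1 / e := one_div_le_one_div_of_le (by linarith) (by exact_mod_cast hed)
      _ ≤ 1 / 2 - (e - 2) / (2 * m) := by
        rw [← sub_nonneg, hchord]
        exact div_nonneg (mul_nonneg (by linarith) (by linarith)) (by positivity)

lemma sum_one_div_add_le {ι : Type*} (s : Finset ι) (x : ι → ℕ) {c : ℝ} (hc : 0 < c) :
    ∑ i ∈ s, 1 / (c + x i) ≤ (#s - 1) / c + 1 / (c + ∑ i ∈ s, x i) := by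
  have hsub := le_sum_of_subadditive (fun k : ℕ => 1 / c - 1 / (c + k)) (by simp) ?_ s x
  · simp only [sum_sub_distrib, sum_const, nsmul_eq_mul, Nat.cast_sum] at hsub
    push_cast
    have : (#s - 1 : ℝ) / c = #s * (1 / c) - 1 / c := by ring
    linarith
  · intro a b
    have ha : (0 : ℝ) ≤ a := a.cast_nonneg
    have hb : (0 : ℝ) ≤ b := b.cast_nonneg
    push_cast
    rw [← sub_nonneg]
    have : 1 / c - 1 / (c + a) + (1 / c - 1 / (c + b)) - (1 / c - 1 / (c + (a + b))) =
        a * b * (2 * c + a + b) / (c * (c + a) * (c + b) * (c + a + b)) := by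
      field_simp; ring
    rw [this]; positivity

section CoreBound

variable {ι : Type*} {S : Finset ι} {e : ι → ℕ}

lemma five_le_card_of_sum_eq (he : ∀ v ∈ S, e v < #S) (hsum : ∑ v ∈ S, e v = 2 * #S + 10) :
    5 ≤ #S := by
  have hle : ∑ v ∈ S, e v ≤ #S * (#S - 1) := by
    simpa using sum_le_sum fun v hv => Nat.le_sub_one_of_lt (he v hv)
  by_contra! h
  interval_cases hS : #S <;> omega

lemma sum_one_div_le_of_card_eq_five (q : ι → ℕ) (he : ∀ v ∈ S, e v < #S)
    (hsum : ∑ v ∈ S, e v = 2 * #S + 10) (hS : #S = 5) :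
    ∑ v ∈ S, (1 : ℝ) / (e v + q v) ≤ 1 + 1 / (4 + ∑ v ∈ S, q v) := by
  have he4 : ∀ v ∈ S, e v = 4 := by
    refine (sum_eq_sum_iff_of_le fun v hv => ?_).1 ?_
    · have := he v hv; omega
    · simp [hsum, hS]
  calc ∑ v ∈ S, (1 : ℝ) / (e v + q v) = ∑ v ∈ S, 1 / ((4 : ℝ) + q v) :=
        sum_congr rfl fun v hv => by rw [he4 v hv]; norm_num
    _ ≤ (#S - 1) / 4 + 1 / ((4 : ℝ) + ∑ v ∈ S, q v) := sum_one_div_add_le S q (by norm_num)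
    _ = 1 + 1 / (4 + ∑ v ∈ S, q v) := by rw [hS]; norm_num

lemma sum_one_div_le_of_six_le_card (q : ι → ℕ) (hd : ∀ v ∈ S, 2 ≤ e v + q v)
    (he : ∀ v ∈ S, e v < #S) (hsum : ∑ v ∈ S, e v = 2 * #S + 10) (hS : 6 ≤ #S) :
    ∑ v ∈ S, (1 : ℝ) / (e v + q v) ≤ #S - 4 := by
  have hS6 : (6 : ℝ) ≤ #S := by exact_mod_cast hS
  have hS1 : (#S : ℝ) - 1 ≠ 0 := by linarith
  have hsumR : ∑ v ∈ S, (e v : ℝ) = 2 * #S + 10 := by exact_mod_cast hsum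
  calc ∑ v ∈ S, (1 : ℝ) / (e v + q v)
      ≤ ∑ v ∈ S, ((1 : ℝ) / 2 - (e v - 2) / (2 * (#S - 1))) := sum_le_sum fun v hv => by
        have := one_div_le_half_sub (m := #S - 1) (hd v hv) le_self_add
          (by have := he v hv; omega)
        push_cast [Nat.cast_sub (card_pos.2 ⟨v, hv⟩)] at this
        exact this
    _ = #S / 2 - 5 / (#S - 1) := by
        rw [sum_sub_distrib, ← sum_div (f := fun v => (e v : ℝ) - 2), sum_sub_distrib, hsumR]
        simp only [sum_const, nsmul_eq_mul]
        field_simp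
        ring
    _ ≤ #S - 4 := by
        have hgap : (#S : ℝ) - 4 - (#S / 2 - 5 / (#S - 1)) =
            (#S - 3) * (#S - 6) / (2 * (#S - 1)) := by
          field_simp; ring
        rw [← sub_nonneg, hgap]
        exact div_nonneg (mul_nonneg (by linarith) (by linarith)) (by linarith)

lemma sum_one_div_le_of_sum_eq (q : ι → ℕ) (hd : ∀ v ∈ S, 2 ≤ e v + q v)
    (he : ∀ v ∈ S, e v < #S) (hsum : ∑ v ∈ S, e v = 2 * #S + 10) :
    ∑ v ∈ S, (1 : ℝ) / (e v + q v) ≤ (#S - 4) + 1 / (#S - 1 + ∑ v ∈ S, q v) := by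
  obtain hS | hS := (five_le_card_of_sum_eq he hsum).eq_or_lt
  · convert sum_one_div_le_of_card_eq_five q he hsum hS.symm using 2 <;> rw [← hS] <;> norm_num
  · have : (0 : ℝ) ≤ 1 / (#S - 1 + ∑ v ∈ S, q v) := by
      have : (1 : ℝ) ≤ #S := by exact_mod_cast hS.le.trans' (by norm_num)
      positivity
    linarith [sum_one_div_le_of_six_le_card q hd he hsum hS]

end CoreBound

namespace SimpleGraph

lemma Preconnected.mem_of_adj_closed {V : Type*} {G : SimpleGraph V} (hG : G.Preconnected)
    {S : Set V} (hS : ∀ ⦃a b⦄, a ∈ S → G.Adj a b → b ∈ S) {u : V} (hu : u ∈ S) (v : V) :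
    v ∈ S := by
  by_contra hv
  obtain ⟨d, -, hd, hd'⟩ := (hG u v).some.exists_boundary_dart S hu hv
  exact hd' (hS hd d.adj)

lemma ncard_neighborSet_eq_degree {V : Type*} (G : SimpleGraph V) (v : V)
    [Fintype (G.neighborSet v)] : (G.neighborSet v).ncard = G.degree v := by
  rw [← Nat.card_coe_set_eq, Nat.card_eq_fintype_card, card_neighborSet_eq_degree]

lemma ncard_edgeSet_eq_card_edgeFinset {V : Type*} (G : SimpleGraph V) [Fintype G.edgeSet] :
    G.edgeSet.ncard = #G.edgeFinset := by
  rw [← coe_edgeFinset, Set.ncard_coe_finset]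

variable {V : Type*} [Fintype V] (G : SimpleGraph V) [DecidableRel G.Adj]

def pendants : Finset V := {v | G.degree v = 1}

variable {G}

lemma mem_pendants {v : V} : v ∈ G.pendants ↔ G.degree v = 1 := by simp [pendants]

lemma sum_pendants_degree : ∑ v ∈ G.pendants, G.degree v = #G.pendants := by
  rw [card_eq_sum_ones]
  exact sum_congr rfl fun v hv => mem_pendants.1 hv

lemma Connected.two_le_degree (hG : G.Connected) [Nontrivial V] {v : V} (hv : v ∉ G.pendants) :
    2 ≤ G.degree v := by
  have := hG.preconnected.degree_pos_of_nontrivial v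
  rw [mem_pendants] at hv
  omega

lemma Connected.not_adj_of_mem_pendants (hG : G.Connected) (hV : 3 ≤ Fintype.card V) {u w : V}
    (hu : u ∈ G.pendants) (hw : w ∈ G.pendants) : ¬G.Adj u w := by
  classical
  intro huw
  have hclosed : ∀ ⦃a b⦄, a ∈ ({u, w} : Set V) → G.Adj a b → b ∈ ({u, w} : Set V) := by
    rintro a b (rfl | rfl) hab
    · exact Or.inr ((degree_eq_one_iff_existsUnique_adj.1 (mem_pendants.1 hu)).unique hab huw)
    · exact Or.inl
        ((degree_eq_one_iff_existsUnique_adj.1 (mem_pendants.1 hw)).unique hab huw.symm)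
  have hsub : (univ : Finset V) ⊆ {u, w} := fun v _ => by
    simpa using hG.preconnected.mem_of_adj_closed hclosed (Set.mem_insert u _) v
  have := (card_le_card hsub).trans card_le_two
  rw [card_univ] at this
  omega

theorem le_sum_one_div_degree (h : ∀ v, 1 ≤ G.degree v) :
    (5 * Fintype.card V - 2 * #G.edgeFinset : ℝ) / 6 ≤ ∑ v, (1 : ℝ) / G.degree v := by
  have hdeg : ∑ v, (G.degree v : ℝ) = 2 * #G.edgeFinset := by
    exact_mod_cast G.sum_degrees_eq_twice_card_edges
  calc (5 * Fintype.card V - 2 * #G.edgeFinset : ℝ) / 6 = ∑ v, (5 - G.degree v : ℝ) / 6 := by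
        rw [← sum_div, sum_sub_distrib, hdeg, sum_const, card_univ, nsmul_eq_mul, mul_comm]
    _ ≤ ∑ v, (1 : ℝ) / G.degree v := sum_le_sum fun v _ => five_sub_div_six_le_one_div (h v)

variable [DecidableEq V]

lemma sum_card_neighborFinset_inter_pendants (hG : G.Connected) (hV : 3 ≤ Fintype.card V) :
    ∑ v ∈ G.pendantsᶜ, #(G.neighborFinset v ∩ G.pendants) = #G.pendants := by
  calc ∑ v ∈ G.pendantsᶜ, #(G.neighborFinset v ∩ G.pendants)
      = ∑ v, #(G.neighborFinset v ∩ G.pendants) := by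
        refine sum_subset (subset_univ _) fun v _ hv => card_eq_zero.2 ?_
        refine eq_empty_of_forall_notMem fun w hw => ?_
        rw [mem_inter, mem_neighborFinset] at hw
        exact hG.not_adj_of_mem_pendants hV (by simpa using hv) hw.2 hw.1
    _ = ∑ u ∈ G.pendants, G.degree u := by
        simp_rw [← card_neighborFinset_eq_degree, neighborFinset_eq_filter, card_filter,
          inter_comm, ← filter_mem_eq_inter, card_filter]
        rw [sum_comm]
        simp [G.adj_comm]
    _ = #G.pendants := sum_pendants_degree

lemma sum_card_neighborFinset_sdiff_pendants (hG : G.Connected) (hV : 3 ≤ Fintype.card V) :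
    ∑ v ∈ G.pendantsᶜ, #(G.neighborFinset v \ G.pendants) + 2 * #G.pendants =
      2 * #G.edgeFinset := by
  have hsplit (v : V) :
      #(G.neighborFinset v \ G.pendants) + #(G.neighborFinset v ∩ G.pendants) = G.degree v :=
    card_sdiff_add_card_inter _ _
  rw [← sum_degrees_eq_twice_card_edges, ← sum_compl_add_sum G.pendants, sum_pendants_degree,
    ← sum_congr rfl fun v _ => hsplit v, sum_add_distrib,
    sum_card_neighborFinset_inter_pendants hG hV]
  ring

lemma card_neighborFinset_sdiff_pendants_lt {v : V} (hv : v ∉ G.pendants) :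
    #(G.neighborFinset v \ G.pendants) < #G.pendantsᶜ := by
  refine card_lt_card ((ssubset_iff_of_subset fun w hw => ?_).2 ⟨v, mem_compl.2 hv, ?_⟩)
  · exact mem_compl.2 (mem_sdiff.1 hw).2
  · simp

theorem Connected.sum_one_div_degree_le (hG : G.Connected) (hV : 3 ≤ Fintype.card V)
    (hE : #G.edgeFinset = Fintype.card V + 5) :
    ∑ v, (1 : ℝ) / G.degree v ≤ (Fintype.card V - 4) + 1 / (Fintype.card V - 1) := by
  have : Nontrivial V := Fintype.one_lt_card_iff_nontrivial.1 (by omega)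
  set P := G.pendants
  have hcard : #Pᶜ + #P = Fintype.card V := by rw [card_compl]; have := card_le_univ P; omega
  have hsum : ∑ v ∈ Pᶜ, #(G.neighborFinset v \ P) + 2 * #P = 2 * #G.edgeFinset :=
    sum_card_neighborFinset_sdiff_pendants hG hV
  have hcore := sum_one_div_le_of_sum_eq (S := Pᶜ) (e := fun v => #(G.neighborFinset v \ P))
    (fun v => #(G.neighborFinset v ∩ P))
    (fun v hv => by
      rw [card_sdiff_add_card_inter, card_neighborFinset_eq_degree]
      exact hG.two_le_degree (mem_compl.1 hv))
    (fun v hv => card_neighborFinset_sdiff_pendants_lt (mem_compl.1 hv))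
    (by omega)
  rw [sum_card_neighborFinset_inter_pendants hG hV] at hcore
  calc ∑ v, (1 : ℝ) / G.degree v
      = ∑ v ∈ Pᶜ, (1 : ℝ) / G.degree v + ∑ v ∈ P, (1 : ℝ) / G.degree v :=
        (sum_compl_add_sum P _).symm
    _ = ∑ v ∈ Pᶜ, (1 : ℝ) / (#(G.neighborFinset v \ P) + #(G.neighborFinset v ∩ P)) + #P := by
        congr 1
        · refine sum_congr rfl fun v _ => ?_
          rw [← Nat.cast_add, card_sdiff_add_card_inter, card_neighborFinset_eq_degree]
        · rw [card_eq_sum_ones, Nat.cast_sum]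
          exact sum_congr rfl fun v hv => by rw [mem_pendants.1 hv]; norm_num
    _ ≤ (#Pᶜ - 4 + 1 / (#Pᶜ - 1 + #P)) + #P := by gcongr
    _ = (Fintype.card V - 4) + 1 / (Fintype.card V - 1) := by
        rw [← hcard]; push_cast; ring

end SimpleGraph

open SimpleGraph

section FinGraphs

variable {n : ℕ}

lemma inverseDegree_eq_sum_one_div_degree (G : SimpleGraph (Fin n)) [DecidableRel G.Adj] :
    inverseDegree G = ∑ v, (1 : ℝ) / G.degree v := by
  simp only [inverseDegree, ncard_neighborSet_eq_degree]

section DegreeFormula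

variable {G : SimpleGraph (Fin n)} [DecidableRel G.Adj] {d : ℕ → ℕ}

lemma isDegreeSequence_of_degree_eq (h : ∀ v : Fin n, G.degree v = d v) :
    IsDegreeSequence G d :=
  ⟨1, fun i => by rw [Equiv.Perm.one_apply, ncard_neighborSet_eq_degree, h]⟩

lemma inverseDegree_eq_sum_range (h : ∀ v : Fin n, G.degree v = d v) :
    inverseDegree G = ∑ i ∈ range n, (1 : ℝ) / d i := by
  rw [inverseDegree_eq_sum_one_div_degree, ← Fin.sum_univ_eq_sum_range (fun i => (1 : ℝ) / d i)]
  simp only [h]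

lemma two_mul_ncard_edgeSet_eq_sum_range (h : ∀ v : Fin n, G.degree v = d v) :
    2 * G.edgeSet.ncard = ∑ i ∈ range n, d i := by
  rw [ncard_edgeSet_eq_card_edgeFinset, ← sum_degrees_eq_twice_card_edges,
    ← Fin.sum_univ_eq_sum_range]
  simp only [h]

end DegreeFormula

def pendantK5 (n : ℕ) : SimpleGraph (Fin n) :=
  SimpleGraph.fromRel fun v w => v.val = 0 ∨ v.val < 5 ∧ w.val < 5

lemma pendantK5_adj {v w : Fin n} :
    (pendantK5 n).Adj v w ↔ v ≠ w ∧ (v.val = 0 ∨ w.val = 0 ∨ v.val < 5 ∧ w.val < 5) := by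
  rw [pendantK5, fromRel_adj]
  tauto

lemma pendantK5_degree [DecidableRel (pendantK5 n).Adj] (hn : 5 ≤ n) (v : Fin n) :
    (pendantK5 n).degree v = if v.val = 0 then n - 1 else if v.val < 5 then 4 else 1 := by
  rw [← card_neighborFinset_eq_degree]
  split_ifs with h0 h5
  · rw [show (pendantK5 n).neighborFinset v = univ.erase v by
      ext w; simp [pendantK5_adj, h0, Fin.ext_iff]; omega]
    rw [card_erase_of_mem (mem_univ v), card_univ, Fintype.card_fin]
  · rw [show (pendantK5 n).neighborFinset v = (Iic ⟨4, by omega⟩).erase v by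
      ext w; simp [pendantK5_adj, Fin.le_def, Fin.ext_iff]; omega]
    rw [card_erase_of_mem (by simp [Fin.le_def]; omega), Fin.card_Iic]
    rfl
  · rw [show (pendantK5 n).neighborFinset v = {⟨0, by omega⟩} by
      ext w; simp [pendantK5_adj, Fin.ext_iff]; omega]
    rw [card_singleton]

lemma pendantK5_connected (hn : 1 ≤ n) : (pendantK5 n).Connected := by
  refine (connected_iff_exists_forall_reachable _).2 ⟨⟨0, hn⟩, fun w => ?_⟩
  rcases eq_or_ne ⟨0, hn⟩ w with rfl | hw
  · rfl
  · exact (pendantK5_adj.2 ⟨hw, Or.inl rfl⟩).reachable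

lemma pendantK5_isDegreeSequence (hn : 5 ≤ n) :
    IsDegreeSequence (pendantK5 n) fun i => if i = 0 then n - 1 else if i < 5 then 4 else 1 := by
  classical
  exact isDegreeSequence_of_degree_eq (pendantK5_degree hn)

lemma pendantK5_ncard_edgeSet (hn : 5 ≤ n) : (pendantK5 n).edgeSet.ncard = n + 5 := by
  classical
  have h := two_mul_ncard_edgeSet_eq_sum_range
    (d := fun i => if i = 0 then n - 1 else if i < 5 then 4 else 1) (pendantK5_degree hn)
  obtain ⟨k, rfl⟩ := Nat.exists_eq_add_of_le hn
  simp [sum_range_add, sum_range_succ] at h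
  omega

lemma pendantK5_inverseDegree (hn : 5 ≤ n) :
    inverseDegree (pendantK5 n) = ((n : ℝ) - 4) + 1 / ((n : ℝ) - 1) := by
  classical
  rw [inverseDegree_eq_sum_range
    (d := fun i => if i = 0 then n - 1 else if i < 5 then 4 else 1) (pendantK5_degree hn)]
  obtain ⟨k, rfl⟩ := Nat.exists_eq_add_of_le hn
  simp [sum_range_add, sum_range_succ]
  ring

def cycleWithChords (n : ℕ) : SimpleGraph (Fin n) :=
  SimpleGraph.fromRel fun v w =>
    w.val = v.val + 1 ∨ v.val = 0 ∧ w.val = n - 1 ∨ w.val = v.val + 5 ∧ w.val < 10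

lemma cycleWithChords_adj {v w : Fin n} :
    (cycleWithChords n).Adj v w ↔ v ≠ w ∧
      (w.val = v.val + 1 ∨ v.val = 0 ∧ w.val = n - 1 ∨ w.val = v.val + 5 ∧ w.val < 10 ∨
        v.val = w.val + 1 ∨ w.val = 0 ∧ v.val = n - 1 ∨ v.val = w.val + 5 ∧ v.val < 10) := by
  rw [cycleWithChords, fromRel_adj]
  tauto

lemma cycleWithChords_degree [DecidableRel (cycleWithChords n).Adj] (hn : 10 ≤ n) (v : Fin n) :
    (cycleWithChords n).degree v = if v.val < 10 then 3 else 2 := by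
  have hv := v.isLt
  let succ : Fin n := ⟨if v.val = n - 1 then 0 else v.val + 1, by split_ifs <;> omega⟩
  rw [← card_neighborFinset_eq_degree]
  split_ifs with h10
  · let pred : Fin n := ⟨if v.val = 0 then n - 1 else v.val - 1, by split_ifs <;> omega⟩
    refine card_eq_three.2 ⟨pred, succ, ⟨(v.val + 5) % 10, by omega⟩, ?_, ?_, ?_, ?_⟩
    all_goals simp only [pred, succ, ne_eq, Fin.ext_iff]
    · split_ifs <;> omega
    · split_ifs <;> omega
    · split_ifs <;> omega
    · ext w
      simp only [mem_neighborFinset, cycleWithChords_adj, mem_insert, mem_singleton, ne_eq,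
        Fin.ext_iff]
      split_ifs <;> omega
  · refine card_eq_two.2 ⟨⟨v.val - 1, by omega⟩, succ, ?_, ?_⟩
    all_goals simp only [succ, ne_eq, Fin.ext_iff]
    · split_ifs <;> omega
    · ext w
      simp only [mem_neighborFinset, cycleWithChords_adj, mem_insert, mem_singleton, ne_eq,
        Fin.ext_iff]
      split_ifs <;> omega

lemma cycleWithChords_connected (hn : 1 ≤ n) : (cycleWithChords n).Connected := by
  obtain ⟨k, rfl⟩ := Nat.exists_eq_add_of_le' hn
  refine (pathGraph_connected k).mono fun u v huv => ?_
  rw [pathGraph_adj] at huv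
  rw [cycleWithChords_adj, ne_eq, Fin.ext_iff]
  omega

lemma cycleWithChords_isDegreeSequence (hn : 10 ≤ n) :
    IsDegreeSequence (cycleWithChords n) fun i => if i < 10 then 3 else 2 := by
  classical
  exact isDegreeSequence_of_degree_eq (cycleWithChords_degree hn)

lemma cycleWithChords_ncard_edgeSet (hn : 10 ≤ n) :
    (cycleWithChords n).edgeSet.ncard = n + 5 := by
  classical
  have h := two_mul_ncard_edgeSet_eq_sum_range (d := fun i => if i < 10 then 3 else 2)
    (cycleWithChords_degree hn)
  obtain ⟨k, rfl⟩ := Nat.exists_eq_add_of_le hn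
  simp [sum_range_add, sum_range_succ] at h
  omega

lemma cycleWithChords_inverseDegree (hn : 10 ≤ n) :
    inverseDegree (cycleWithChords n) = ((n : ℝ) - 10) / 2 + 10 / 3 := by
  classical
  rw [inverseDegree_eq_sum_range (d := fun i => if i < 10 then 3 else 2)
    (cycleWithChords_degree hn)]
  obtain ⟨k, rfl⟩ := Nat.exists_eq_add_of_le hn
  simp [sum_range_add, sum_range_succ]
  ring

end FinGraphs

/-- Bounds for the inverse degree of a hexacyclic graph:
`(n-10)/2 + 10/3 ≤ ρ(G) ≤ (n-4) + 1/(n-1)`, with the upper bound attained by a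
hexacyclic graph with degree sequence `(n-1, 4^4, 1^{n-5})` and, for `n ≥ 10`,
the lower bound attained by a hexacyclic graph with degree sequence
`(3^{10}, 2^{n-10})`. -/
theorem hexacyclic_inverse_degree_bounds (n : ℕ) (hn : 8 ≤ n)
    (G : SimpleGraph (Fin n)) (hconn : G.Connected)
    (hedges : G.edgeSet.ncard = n + 5) :
    (((n : ℝ) - 10) / 2 + 10 / 3 ≤ inverseDegree G ∧
      inverseDegree G ≤ ((n : ℝ) - 4) + 1 / ((n : ℝ) - 1)) ∧
    (∃ H : SimpleGraph (Fin n), H.Connected ∧ H.edgeSet.ncard = n + 5 ∧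
      IsDegreeSequence H
        (fun i => if i = 0 then n - 1 else if i < 5 then 4 else 1) ∧
      inverseDegree H = ((n : ℝ) - 4) + 1 / ((n : ℝ) - 1)) ∧
    (10 ≤ n →
      ∃ H : SimpleGraph (Fin n), H.Connected ∧ H.edgeSet.ncard = n + 5 ∧
        IsDegreeSequence H (fun i => if i < 10 then 3 else 2) ∧
        inverseDegree H = ((n : ℝ) - 10) / 2 + 10 / 3) := by
  classical
  have hE : #G.edgeFinset = Fintype.card (Fin n) + 5 := by
    rw [← ncard_edgeSet_eq_card_edgeFinset, hedges, Fintype.card_fin]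
  have : Nontrivial (Fin n) := Fin.nontrivial_iff_two_le.2 (by omega)
  have hlower := le_sum_one_div_degree fun v => hconn.preconnected.degree_pos_of_nontrivial v
  have hupper := hconn.sum_one_div_degree_le (by simp only [Fintype.card_fin]; omega) hE
  rw [hE, Fintype.card_fin] at hlower
  rw [Fintype.card_fin] at hupper
  rw [inverseDegree_eq_sum_one_div_degree]
  refine ⟨⟨by push_cast at hlower; linarith, hupper⟩,
    ⟨pendantK5 n, pendantK5_connected (by omega), pendantK5_ncard_edgeSet (by omega),
      pendantK5_isDegreeSequence (by omega), pendantK5_inverseDegree (by omega)⟩,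
    fun h10 => ⟨cycleWithChords n, cycleWithChords_connected (by omega),
      cycleWithChords_ncard_edgeSet h10, cycleWithChords_isDegreeSequence h10,
      cycleWithChords_inverseDegree h10⟩⟩
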